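/- For every τ > 0 and x ∈ ℝ, the mixed partial derivative ∂_τ ∂_x v exists at (τ,x) and satisfies the Black–Scholes greek relation ∂_τ ∂_x v(τ,x) = (1/2 − x/τ) · ∂_τ v(τ,x). -/

import Mathlib

open MeasureTheory

/-- Standard normal cumulative distribution function. -/
noncomputable def stdN (y : ℝ) : ℝ :=
  ∫ u in Set.Iio y, Real.exp (-u ^ 2 / 2) / Real.sqrt (2 * Real.pi)

/-- Standard normal density. -/
noncomputable def stdn (y : ℝ) : ℝ :=
  Real.exp (-y ^ 2 / 2) / Real.sqrt (2 * Real.pi)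

/-- Unit-volatility Black–Scholes price in reduced variables. -/
noncomputable def bsv (τ x : ℝ) : ℝ :=
  Real.exp x * stdN (x / Real.sqrt τ + Real.sqrt τ / 2) -
    stdN (x / Real.sqrt τ - Real.sqrt τ / 2)

/-! The derivative of `v` in `x` is the delta `e^x N(d₊)`, because the two density terms cancel
by the identity `n(d₋) = e^x n(d₊)`. The same identity gives `∂_τ v = e^x n(d₊) ∂_τ(d₊ - d₋)`,
while `∂_τ ∂_x v = e^x n(d₊) ∂_τ d₊`; since `d₊ - d₋ = √τ`, the ratio of the two is
`∂_τ d₊ / ∂_τ √τ = 1/2 - x/τ`. -/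

open Real Set

theorem hasDerivAt_integral_Iio {E : Type*} [NormedAddCommGroup E] [NormedSpace ℝ E]
    [CompleteSpace E] {f : ℝ → E} (hf : Integrable f) (hc : Continuous f) (y : ℝ) :
    HasDerivAt (fun z => ∫ u in Iio z, f u) (f y) y := by
  have hsplit : (fun z => ∫ u in Iio z, f u) = fun z => (∫ u in Iic 0, f u) + ∫ u in 0..z, f u := by
    funext z
    rw [setIntegral_congr_set Iio_ae_eq_Iic,
      ← intervalIntegral.integral_Iic_sub_Iic hf.integrableOn hf.integrableOn]
    abel
  rw [hsplit]
  exact (intervalIntegral.integral_hasDerivAt_right hf.intervalIntegrable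
    (hc.stronglyMeasurableAtFilter _ _) hc.continuousAt).const_add _

theorem integrable_stdn : Integrable stdn := by
  convert (integrable_exp_neg_mul_sq (by norm_num : (0:ℝ) < 1/2)).div_const √(2 * π) using 2
  simp only [stdn]
  ring_nf

theorem continuous_stdn : Continuous stdn := by
  unfold stdn
  fun_prop

theorem hasDerivAt_stdN (y : ℝ) : HasDerivAt stdN (stdn y) y :=
  hasDerivAt_integral_Iio integrable_stdn continuous_stdn y

theorem hasDerivAt_stdn (y : ℝ) : HasDerivAt stdn (-y * stdn y) y := by
  have hexponent : HasDerivAt (fun u : ℝ => -u ^ 2 / 2) (-y) y :=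
    ((hasDerivAt_pow 2 y).fun_neg.div_const 2).congr_deriv (by push_cast; ring)
  exact (hexponent.exp.div_const _).congr_deriv (by rw [stdn]; ring)

theorem stdn_div_sub_half {s : ℝ} (hs : s ≠ 0) (x : ℝ) :
    stdn (x / s - s / 2) = exp x * stdn (x / s + s / 2) := by
  rw [stdn, stdn, mul_div_assoc', ← exp_add]
  congr 2
  field_simp
  ring

theorem hasDerivAt_div_sqrt_add_mul_sqrt (x c : ℝ) {τ : ℝ} (hτ : 0 < τ) :
    HasDerivAt (fun t => x / √t + c * √t) ((c - x / τ) / (2 * √τ)) τ := by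
  have hsqrt := hasDerivAt_sqrt hτ.ne'
  have hs : √τ ≠ 0 := (sqrt_pos.2 hτ).ne'
  refine (((hasDerivAt_const τ x).div hsqrt hs).fun_add (hsqrt.const_mul c)).congr_deriv ?_
  field_simp
  rw [sq_sqrt hτ.le]
  ring

noncomputable def dPlus (τ x : ℝ) : ℝ := x / √τ + √τ / 2

noncomputable def dMinus (τ x : ℝ) : ℝ := x / √τ - √τ / 2

theorem stdn_dMinus {τ : ℝ} (hτ : 0 < τ) (x : ℝ) :
    stdn (dMinus τ x) = exp x * stdn (dPlus τ x) :=
  stdn_div_sub_half (sqrt_pos.2 hτ).ne' x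

theorem hasDerivAt_dPlus_fst {τ : ℝ} (hτ : 0 < τ) (x : ℝ) :
    HasDerivAt (fun t => dPlus t x) ((1 / 2 - x / τ) / (2 * √τ)) τ := by
  convert hasDerivAt_div_sqrt_add_mul_sqrt x (1 / 2) hτ using 2 with t
  rw [dPlus]
  ring

theorem hasDerivAt_dMinus_fst {τ : ℝ} (hτ : 0 < τ) (x : ℝ) :
    HasDerivAt (fun t => dMinus t x) ((-1 / 2 - x / τ) / (2 * √τ)) τ := by
  convert hasDerivAt_div_sqrt_add_mul_sqrt x (-1 / 2) hτ using 2 with t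
  rw [dMinus]
  ring

theorem hasDerivAt_bsv_snd {τ : ℝ} (hτ : 0 < τ) (x : ℝ) :
    HasDerivAt (bsv τ) (exp x * stdN (dPlus τ x)) x := by
  have hlin (c : ℝ) : HasDerivAt (fun y => y / √τ + c) (1 / √τ) x := by
    simpa using ((hasDerivAt_id x).div_const √τ).add_const c
  have hPlus := (hasDerivAt_stdN (dPlus τ x)).comp x (hlin (√τ / 2))
  have hMinus := (hasDerivAt_stdN (dMinus τ x)).comp x (hlin (-(√τ / 2)))
  refine (((hasDerivAt_exp x).mul hPlus).sub hMinus).congr_deriv ?_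
  rw [stdn_dMinus hτ, Function.comp_apply]
  ring

theorem hasDerivAt_bsv_fst {τ : ℝ} (hτ : 0 < τ) (x : ℝ) :
    HasDerivAt (fun t => bsv t x) (exp x * stdn (dPlus τ x) / (2 * √τ)) τ := by
  have hPlus := (hasDerivAt_stdN (dPlus τ x)).comp τ (hasDerivAt_dPlus_fst hτ x)
  have hMinus := (hasDerivAt_stdN (dMinus τ x)).comp τ (hasDerivAt_dMinus_fst hτ x)
  refine ((hPlus.const_mul (exp x)).sub hMinus).congr_deriv ?_
  rw [stdn_dMinus hτ]
  ring

theorem hasDerivAt_deriv_bsv_snd_fst {τ : ℝ} (hτ : 0 < τ) (x : ℝ) :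
    HasDerivAt (fun t => deriv (bsv t) x)
      (exp x * (stdn (dPlus τ x) * ((1 / 2 - x / τ) / (2 * √τ)))) τ := by
  have hPlus := (hasDerivAt_stdN (dPlus τ x)).comp τ (hasDerivAt_dPlus_fst hτ x)
  refine (hPlus.const_mul (exp x)).congr_of_eventuallyEq ?_
  filter_upwards [Ioi_mem_nhds hτ] with t ht
  exact (hasDerivAt_bsv_snd ht x).deriv

/-- Black–Scholes greek relation `∂_τ ∂_x v(τ,x) = (1/2 − x/τ) ∂_τ v(τ,x)`. -/
theorem bsv_mixed_deriv (τ x : ℝ) (hτ : 0 < τ) :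
    ∃ vτ vτx : ℝ,
      HasDerivAt (fun t => bsv t x) vτ τ ∧
      HasDerivAt (fun t => deriv (fun y => bsv t y) x) vτx τ ∧
      vτx = (1 / 2 - x / τ) * vτ :=
  ⟨_, _, hasDerivAt_bsv_fst hτ x, hasDerivAt_deriv_bsv_snd_fst hτ x, by ring⟩
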